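/- (Kemperman/Takács hitting-time formula, scalar case.) Let λ : ℕ → ℝ be a probability mass function (λ(m) ≥ 0, Σ_{m=0}^∞ λ(m) = 1), and consider i.i.d. claims C_1, C_2, … with law λ: the probability of a claim path (c_1,…,c_n) ∈ ℕ^n is ∏_{k=1}^n λ(c_k). Let S_k = c_1 + ⋯ + c_k, X_k = k − S_k, and τ_a^+ = min{k ≥ 0 : X_k ≥ a}. Then for all integers n ≥ a ≥ 1: P(τ_a^+ = n) = (a/n) · λ^{*n}(n − a), where λ^{*n}(s) = P(S_n = s) is the n-fold convolution of λ. -/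

import Mathlib

/-!
Both sides are finite sums over the claim paths `c` of length `n` with `S_n = n - a`: the
right side after expanding the convolution, the left side because `τ_a^+ = n` forces
`X_n = a` (the walk `X` climbs by at most one per step). Extend such a path `n`-periodically.
Its walk `X` has upward steps of at most one and gains exactly `a` per period, so by the cycle
lemma exactly `a` of its `n` cyclic rotations stay below `a` before time `n`: they start at the
first visits of `X` to the `a` highest levels it reaches in one period. Rotations permute the
paths and preserve the weight `∏ λ(c_k)`, so summing over all rotations of all paths gives
`a · λ^{*n}(n - a) = n · P(τ_a^+ = n)`.
-/

open scoped BigOperators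

noncomputable section

namespace CMB

/-- Partial sums `S_k = c_1 + ⋯ + c_k` of the claims (`C i` is claim number `i+1`). -/
def S {n : ℕ} (C : Fin n → ℕ) (k : ℕ) : ℕ :=
  ∑ j : Fin n, if (j : ℕ) < k then C j else 0

/-- `n`-fold convolution of a pmf on `ℕ`. -/
def sconv (lam : ℕ → ℝ) : ℕ → ℕ → ℝ
  | 0, m => if m = 0 then 1 else 0
  | n + 1, m => ∑ k ∈ Finset.range (m + 1), sconv lam n k * lam (m - k)

open Finset

theorem sum_antidiagonalTuple_succ {M : Type*} [AddCommMonoid M] (n m : ℕ)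
    (f : (Fin (n + 1) → ℕ) → M) :
    ∑ c ∈ Nat.antidiagonalTuple (n + 1) m, f c =
      ∑ k ∈ range (m + 1), ∑ d ∈ Nat.antidiagonalTuple n k, f (Fin.snoc d (m - k)) := by
  rw [sum_sigma']
  symm
  refine sum_nbij' (fun x => Fin.snoc x.2 (m - x.1)) (fun c => ⟨∑ j, Fin.init c j, Fin.init c⟩)
    ?_ ?_ ?_ ?_ fun _ _ => rfl
  · rintro ⟨k, d⟩ hx
    simp only [mem_sigma, mem_range, Nat.mem_antidiagonalTuple] at hx ⊢
    simp only [Fin.sum_univ_castSucc, Fin.snoc_castSucc, Fin.snoc_last, hx.2]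
    omega
  · intro c hc
    simp only [mem_sigma, mem_range, Nat.mem_antidiagonalTuple] at hc ⊢
    rw [Fin.sum_univ_castSucc] at hc
    simp only [Fin.init, and_true]
    omega
  · rintro ⟨k, d⟩ hx
    simp only [mem_sigma, mem_range, Nat.mem_antidiagonalTuple] at hx
    simp [Fin.init_snoc, hx.2]
  · intro c hc
    simp only [Nat.mem_antidiagonalTuple] at hc
    rw [Fin.sum_univ_castSucc] at hc
    convert Fin.snoc_init_self c
    simp only [Fin.init]
    omega

theorem sconv_eq_sum_antidiagonalTuple (lam : ℕ → ℝ) (n m : ℕ) :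
    sconv lam n m = ∑ c ∈ Nat.antidiagonalTuple n m, ∏ k, lam (c k) := by
  induction n generalizing m with
  | zero => cases m <;> simp [sconv]
  | succ n ih => simp [sconv, ih, sum_antidiagonalTuple_succ, sum_mul, Fin.prod_univ_castSucc]

theorem natCast_mul_sum_eq_card_mul_sum_filter {α ι R : Type*} [CommSemiring R]
    (s : Finset α) (t : Finset ι) (σ : ι → Equiv.Perm α) (f : α → R) (p : α → Prop)
    [DecidablePred p] (a : ℕ) (hs : ∀ i ∈ t, ∀ x, σ i x ∈ s ↔ x ∈ s)
    (hf : ∀ i ∈ t, ∀ x, f (σ i x) = f x) (hcount : ∀ x ∈ s, #{i ∈ t | p (σ i x)} = a) :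
    a * ∑ x ∈ s, f x = #t * ∑ x ∈ s with p x, f x := by
  calc (a : R) * ∑ x ∈ s, f x
      = ∑ x ∈ s, ∑ i ∈ t, if p (σ i x) then f (σ i x) else 0 := by
        rw [mul_sum]
        refine sum_congr rfl fun x hx => ?_
        rw [← hcount x hx, natCast_card_filter, sum_mul]
        exact sum_congr rfl fun i hi => by rw [ite_mul, one_mul, zero_mul, hf i hi]
    _ = ∑ i ∈ t, ∑ x ∈ s, if p x then f x else 0 := by
        rw [sum_comm]
        exact sum_congr rfl fun i hi => sum_equiv (σ i) (fun x => (hs i hi x).symm) fun _ _ => rfl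
    _ = #t * ∑ x ∈ s with p x, f x := by rw [sum_const, nsmul_eq_mul, sum_filter]

section CycleLemma

variable {T : ℕ → ℤ} {n a : ℕ}

theorem exists_first_hitting_time (hstep : ∀ k, T (k + 1) ≤ T k + 1) {v : ℤ} {j : ℕ}
    (h0 : T 0 ≤ v) (hj : v ≤ T j) : ∃ l ≤ j, T l = v ∧ ∀ i < l, T i < v := by
  classical
  have hex : ∃ l, v ≤ T l := ⟨j, hj⟩
  refine ⟨Nat.find hex, Nat.find_min' hex hj, ?_, fun i hi => not_le.1 (Nat.find_min hex hi)⟩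
  have hle := Nat.find_spec hex
  cases hf : Nat.find hex with
  | zero => rw [hf] at hle; omega
  | succ l =>
    have := Nat.find_min hex (show l < Nat.find hex by omega)
    have := hstep l
    rw [hf] at hle
    omega

theorem forall_lt_add_iff_of_periodic (hper : ∀ k, T (k + n) = T k + a) {r : ℕ} (hr : r < n) :
    (∀ k < n, T (r + k) < T r + a) ↔ (∀ j < r, T j < T r) ∧ ∀ j < n, T j < T r + a := by
  constructor
  · intro h
    have hrec : ∀ j < r, T j < T r := fun j hj => by
      have := h (j + n - r) (by omega)
      rw [show r + (j + n - r) = j + n by omega, hper] at this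
      omega
    refine ⟨hrec, fun j hj => ?_⟩
    rcases lt_or_ge j r with hjr | hjr
    · have := hrec j hjr
      omega
    · simpa [show r + (j - r) = j by omega] using h (j - r) (by omega)
  · rintro ⟨hrec, hbound⟩ k hk
    rcases lt_or_ge (r + k) n with h | h
    · exact hbound _ h
    · have := hrec (r + k - n) (by omega)
      rw [show r + k = r + k - n + n by omega, hper]
      omega

theorem cycle_lemma (ha : 0 < a) (hstep : ∀ k, T (k + 1) ≤ T k + 1)
    (hper : ∀ k, T (k + n) = T k + a) :
    #{r ∈ range n | ∀ k < n, T (r + k) < T r + a} = a := by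
  have hn : 0 < n := Nat.pos_of_ne_zero fun h => ha.ne' (by simpa [h] using hper 0)
  obtain ⟨j₀, hj₀, hmax⟩ := exists_max_image (range n) T ⟨0, mem_range.2 hn⟩
  rw [mem_range] at hj₀
  simp only [mem_range] at hmax
  set good := {r ∈ range n | ∀ k < n, T (r + k) < T r + a}
  have hgood : ∀ r, r ∈ good ↔ r < n ∧ (∀ j < r, T j < T r) ∧ ∀ j < n, T j < T r + a := by
    intro r
    rw [mem_filter, mem_range]
    exact ⟨fun h => ⟨h.1, (forall_lt_add_iff_of_periodic hper h.1).1 h.2⟩,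
      fun h => ⟨h.1, (forall_lt_add_iff_of_periodic hper h.1).2 h.2⟩⟩
  have hinj : Set.InjOn T good := by
    intro r hr r' hr' heq
    rw [mem_coe, hgood] at hr hr'
    by_contra hne
    rcases Nat.lt_or_gt_of_ne hne with h | h
    · exact (hr'.2.1 r h).ne heq
    · exact (hr.2.1 r' h).ne heq.symm
  have himage : good.image T = Ioc (T j₀ - a) (T j₀) := by
    ext v
    simp only [mem_image, mem_Ioc, hgood]
    constructor
    · rintro ⟨r, ⟨hr, -, hbound⟩, rfl⟩
      exact ⟨by linarith [hbound j₀ hj₀], hmax r hr⟩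
    · rintro ⟨hlo, hhi⟩
      have h0 : T 0 ≤ v := by
        have h1 := hper 0
        have h2 := hstep (n - 1)
        rw [zero_add] at h1
        rw [Nat.sub_add_cancel hn] at h2
        linarith [hmax (n - 1) (by omega)]
      obtain ⟨l, hl, rfl, hrec⟩ := exists_first_hitting_time hstep h0 hhi
      exact ⟨l, ⟨by omega, hrec, fun j hj => by linarith [hmax j hj]⟩, rfl⟩
  rw [← card_image_of_injOn hinj, himage, Int.card_Ioc]
  omega

end CycleLemma

section Walk

open Fin.NatCast

variable {n : ℕ} [NeZero n]

/-- `X_k = k - S_k` for the `n`-periodic extension of the claims (`c j` reads `j` mod `n`). -/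
def walk (c : Fin n → ℕ) (k : ℕ) : ℤ := k - ∑ j ∈ range k, (c j : ℤ)

def rotate (j : ℕ) : Equiv.Perm (Fin n → ℕ) :=
  (Equiv.addRight (j : Fin n)).symm.arrowCongr (Equiv.refl ℕ)

@[simp]
theorem rotate_apply (j : ℕ) (c : Fin n → ℕ) (i : Fin n) : rotate j c i = c (i + j) := rfl

theorem sum_rotate (j : ℕ) (c : Fin n → ℕ) : ∑ i, rotate j c i = ∑ i, c i :=
  Equiv.sum_comp (Equiv.addRight (j : Fin n)) c

theorem prod_rotate {M : Type*} [CommMonoid M] (f : ℕ → M) (j : ℕ) (c : Fin n → ℕ) :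
    ∏ i, f (rotate j c i) = ∏ i, f (c i) :=
  Equiv.prod_comp (Equiv.addRight (j : Fin n)) fun i => f (c i)

theorem walk_succ_le (c : Fin n → ℕ) (k : ℕ) : walk c (k + 1) ≤ walk c k + 1 := by
  simp only [walk, sum_range_succ, Nat.cast_succ]
  linarith [(c k).cast_nonneg (α := ℤ)]

theorem walk_add (c : Fin n → ℕ) (j k : ℕ) :
    walk c (j + k) = walk c j + walk (rotate j c) k := by
  simp only [walk, sum_range_add, rotate_apply, Nat.cast_add]
  simp_rw [add_comm (j : Fin n)]
  ring

theorem walk_add_self (c : Fin n → ℕ) (k : ℕ) : walk c (k + n) = walk c k + walk c n := by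
  rw [add_comm, walk_add, add_comm]
  congr
  ext i
  simp

theorem S_eq_sum_range (c : Fin n → ℕ) {k : ℕ} (hk : k ≤ n) : S c k = ∑ j ∈ range k, c j := by
  have hfilter : {j ∈ range n | j < k} = range k := by
    ext j
    simp only [mem_filter, mem_range]
    omega
  rw [← hfilter, sum_filter, ← Fin.sum_univ_eq_sum_range (fun j => if j < k then c j else 0)]
  simp [S]

theorem walk_eq_sub_S (c : Fin n → ℕ) {k : ℕ} (hk : k ≤ n) : walk c k = k - S c k := by
  simp [walk, S_eq_sum_range c hk]

theorem walk_self (c : Fin n → ℕ) : walk c n = n - ∑ i, c i := by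
  rw [walk, ← Fin.sum_univ_eq_sum_range (fun j => (c j : ℤ))]
  simp

theorem card_filter_rotate_walk_lt {a : ℕ} (ha : 0 < a) (han : a ≤ n) {c : Fin n → ℕ}
    (hc : ∑ i, c i = n - a) : #{r ∈ range n | ∀ k < n, walk (rotate r c) k < a} = a := by
  have hper : ∀ k, walk c (k + n) = walk c k + a := by
    intro k
    rw [walk_add_self, walk_self, hc, Nat.cast_sub han]
    ring
  simpa only [walk_add, add_sub_cancel_left, ← lt_sub_iff_add_lt'] using
    cycle_lemma ha (walk_succ_le c) hper

theorem hitting_time_eq_iff_mem_filter {a : ℕ} (han : a ≤ n) (c : Fin n → ℕ) :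
    ((∀ k, k < n → (k : ℤ) - S c k < (a : ℤ)) ∧ (a : ℤ) ≤ (n : ℤ) - S c n) ↔
      c ∈ {c ∈ Nat.antidiagonalTuple n (n - a) | ∀ k < n, walk c k < a} := by
  have hn : 0 < n := Nat.pos_of_ne_zero (NeZero.ne n)
  have hlast := walk_succ_le c (n - 1)
  rw [Nat.sub_add_cancel hn, walk_self] at hlast
  have hwalk : (∀ k, k < n → (k : ℤ) - S c k < (a : ℤ)) ↔ ∀ k < n, walk c k < a :=
    forall₂_congr fun k hk => by rw [walk_eq_sub_S c hk.le]
  rw [hwalk, ← walk_eq_sub_S c le_rfl, walk_self, mem_filter, Nat.mem_antidiagonalTuple]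
  constructor
  · rintro ⟨hlt, hge⟩
    have := hlt (n - 1) (by omega)
    exact ⟨by omega, hlt⟩
  · rintro ⟨hsum, hlt⟩
    exact ⟨hlt, by omega⟩

end Walk

theorem kemperman_scalar_general (lam : ℕ → ℝ)
    (a n : ℕ) (ha : 1 ≤ a) (han : a ≤ n) :
    (∑' c : { c : Fin n → ℕ //
        (∀ k, k < n → (k : ℤ) - S c k < (a : ℤ)) ∧ (a : ℤ) ≤ (n : ℤ) - S c n },
      ∏ k : Fin n, lam (c.1 k)) =
      ((a : ℝ) / (n : ℝ)) * sconv lam n (n - a) := by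
  have : NeZero n := ⟨by omega⟩
  set s := Nat.antidiagonalTuple n (n - a)
  have hrotate := natCast_mul_sum_eq_card_mul_sum_filter s (range n) rotate
    (fun c => ∏ k, lam (c k)) (fun c => ∀ k < n, walk c k < a) a
    (fun r _ c => by simp only [s, Nat.mem_antidiagonalTuple, sum_rotate])
    (fun r _ c => prod_rotate lam r c)
    (fun c hc => card_filter_rotate_walk_lt ha han (Nat.mem_antidiagonalTuple.1 hc))
  rw [card_range] at hrotate
  have hn : (n : ℝ) ≠ 0 := by norm_cast; omega
  calc _ = ∑ c ∈ s with ∀ k < n, walk c k < a, ∏ k, lam (c k) :=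
        (Equiv.tsum_eq (Equiv.subtypeEquivRight (hitting_time_eq_iff_mem_filter han))
          fun c => ∏ k, lam (c.1 k)).trans
          (Finset.tsum_subtype _ fun c : Fin n → ℕ => ∏ k, lam (c k))
    _ = a / n * sconv lam n (n - a) := by
        rw [sconv_eq_sum_antidiagonalTuple]
        field_simp
        linarith

/-- Kemperman/Takács hitting-time formula, scalar case.  For i.i.d.
claims with pmf `λ` on `ℕ`, `X_k = k − S_k` and `τ_a^+ = min{k ≥ 0 : X_k ≥ a}`, one has,
for `n ≥ a ≥ 1`, `P(τ_a^+ = n) = (a/n)·λ^{*n}(n − a)`.  The event `{τ_a^+ = n}` is the set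
of claim paths with `k − S_k < a` for all `k < n` and `n − S_n ≥ a`, and its probability is
the sum of the products `∏_k λ(c_k)` over these paths. -/
theorem kemperman_scalar (lam : ℕ → ℝ) (hnn : ∀ m, 0 ≤ lam m) (hsum : HasSum lam 1)
    (a n : ℕ) (ha : 1 ≤ a) (han : a ≤ n) :
    (∑' c : { c : Fin n → ℕ //
        (∀ k, k < n → (k : ℤ) - S c k < (a : ℤ)) ∧ (a : ℤ) ≤ (n : ℤ) - S c n },
      ∏ k : Fin n, lam (c.1 k)) =
      ((a : ℝ) / (n : ℝ)) * sconv lam n (n - a) :=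
  kemperman_scalar_general lam a n ha han

end CMB
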